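/- arXiv:1306.2663 — 2 statements merged into one kernel-verified Lean document; each statement's English description precedes it below -/
import Mathlib

section
/- Let V be an n×n real orthogonal matrix (VᵀV = I), let λ ∈ ℝⁿ, and let ν ≥ 0. Let Z = V·diag(λ)·Vᵀ and W = V·diag(max(0, λ₁ − ν), …, max(0, λₙ − ν))·Vᵀ. Then W minimizes the proximal objective over the positive semidefinite cone: for every n×n real symmetric positive semidefinite matrix X, ν·tr(W) + (1/2)·‖W − Z‖_F² ≤ ν·tr(X) + (1/2)·‖X − Z‖_F². -/
/-!
Let `f` be the objective and `G = ν I + W - Z = V diag(max(0, ν - λᵢ)) Vᵀ`, so that `W` and `G`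
are the positive and negative parts of `Z - ν I`. Expanding the square gives
`f(X) - f(W) = tr(G (X - W)) + ½‖X - W‖_F²`. Now `tr(G X) ≥ 0` because `G` and `X` are both
positive semidefinite, and `G W = 0` because `max(0, ν - λᵢ)` and `max(0, λᵢ - ν)` are never
both nonzero.
-/

open Matrix

namespace Matrix

variable {m : Type*} [Fintype m]

lemma trace_mul_transpose_sub_sub {R : Type*} [CommRing R] (X W Z : Matrix m m R) :
    ((X - Z) * (X - Z)ᵀ).trace =
      ((W - Z) * (W - Z)ᵀ).trace + 2 * ((W - Z)ᵀ * (X - W)).trace +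
        ((X - W) * (X - W)ᵀ).trace := by
  have hXZ : X - Z = (X - W) + (W - Z) := by abel
  have hcross₁ : ((W - Z) * (X - W)ᵀ).trace = ((W - Z)ᵀ * (X - W)).trace := by
    rw [← trace_transpose, transpose_mul, transpose_transpose, trace_mul_comm]
  have hcross₂ : ((X - W) * (W - Z)ᵀ).trace = ((W - Z)ᵀ * (X - W)).trace :=
    trace_mul_comm _ _
  rw [hXZ, transpose_add, add_mul, mul_add, mul_add, trace_add, trace_add, trace_add,
    hcross₁, hcross₂]
  ring

lemma trace_mul_transpose_self_nonneg {n : Type*} [Fintype n] (A : Matrix m n ℝ) :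
    0 ≤ (A * Aᵀ).trace := by
  simpa using (posSemidef_self_mul_conjTranspose A).trace_nonneg

open scoped ComplexOrder MatrixOrder in
lemma PosSemidef.trace_mul_nonneg {𝕜 : Type*} [RCLike 𝕜] {A B : Matrix m m 𝕜}
    (hA : A.PosSemidef) (hB : B.PosSemidef) : 0 ≤ (A * B).trace := by
  classical
  obtain ⟨C, rfl⟩ := CStarAlgebra.nonneg_iff_eq_star_mul_self.mp hB.nonneg
  rw [star_eq_conjTranspose, ← Matrix.mul_assoc, trace_mul_cycle]
  exact (hA.mul_mul_conjTranspose_same C).trace_nonneg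

lemma prox_objective_le_of_trace_mul_nonneg [DecidableEq m] {X W Z : Matrix m m ℝ} {ν : ℝ}
    (h : 0 ≤ ((ν • 1 + (W - Z)ᵀ) * (X - W)).trace) :
    ν * W.trace + 1 / 2 * ((W - Z) * (W - Z)ᵀ).trace ≤
      ν * X.trace + 1 / 2 * ((X - Z) * (X - Z)ᵀ).trace := by
  rw [add_mul, trace_add, smul_mul, one_mul, trace_smul, trace_sub, smul_eq_mul] at h
  have hexpand := trace_mul_transpose_sub_sub X W Z
  have hdist := trace_mul_transpose_self_nonneg (X - W)
  linarith

end Matrix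

lemma max_zero_sub_mul_max_zero_sub {α : Type*} [Ring α] [LinearOrder α] [IsOrderedRing α]
    (a b : α) : max 0 (a - b) * max 0 (b - a) = 0 := by
  rcases le_total a b with h | h <;> simp [max_eq_left (sub_nonpos.mpr h)]

lemma add_max_zero_sub_sub {α : Type*} [Ring α] [LinearOrder α] [IsOrderedRing α]
    (a b : α) : b + max 0 (a - b) - a = max 0 (b - a) := by
  rcases le_total a b with h | h <;>
    simp [max_eq_left (sub_nonpos.mpr h), max_eq_right (sub_nonneg.mpr h)]

theorem shrinkage_prox_optimal_general
    {n : ℕ} (V : Matrix (Fin n) (Fin n) ℝ) (hV : Vᵀ * V = 1)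
    (l : Fin n → ℝ) (ν : ℝ)
    (Z W : Matrix (Fin n) (Fin n) ℝ)
    (hZ : Z = V * Matrix.diagonal l * Vᵀ)
    (hW : W = V * Matrix.diagonal (fun i => max 0 (l i - ν)) * Vᵀ) :
    ∀ X : Matrix (Fin n) (Fin n) ℝ, X.PosSemidef →
      ν * W.trace + (1 / 2) * (Real.sqrt (((W - Z) * (W - Z)ᵀ).trace)) ^ 2 ≤
        ν * X.trace + (1 / 2) * (Real.sqrt (((X - Z) * (X - Z)ᵀ).trace)) ^ 2 := by
  intro X hX
  let φ := Unitary.conjStarAlgAut ℝ _ ⟨V, (mem_orthogonalGroup_iff' (Fin n) ℝ).mpr hV⟩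
  set w : Fin n → ℝ := fun i => max 0 (l i - ν)
  set d : Fin n → ℝ := fun i => max 0 (ν - l i)
  have hG : ν • 1 + (W - Z)ᵀ = φ (diagonal d) := by
    have hWZ : W - Z = φ (diagonal w - diagonal l) := by rw [hW, hZ, map_sub]; rfl
    rw [← conjTranspose_eq_transpose_of_trivial, ← star_eq_conjTranspose, hWZ, ← map_star,
      ← map_one φ, ← map_smul, ← map_add]
    congr 1
    simp only [smul_one_eq_diagonal, diagonal_sub, star_eq_conjTranspose,
      conjTranspose_eq_transpose_of_trivial, diagonal_transpose, diagonal_add, add_sub_assoc',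
      add_max_zero_sub_sub, w, d]
  have hGW : φ (diagonal d) * W = 0 := by
    rw [hW, show V * diagonal w * Vᵀ = φ (diagonal w) from rfl, ← map_mul,
      diagonal_mul_diagonal]
    simp only [d, w, max_zero_sub_mul_max_zero_sub, diagonal_zero, map_zero]
  have hGpsd : (φ (diagonal d)).PosSemidef :=
    (PosSemidef.diagonal fun _ => le_max_left _ _).mul_mul_conjTranspose_same V
  have hGX : 0 ≤ (φ (diagonal d) * X).trace := hGpsd.trace_mul_nonneg hX
  rw [Real.sq_sqrt (trace_mul_transpose_self_nonneg _),
    Real.sq_sqrt (trace_mul_transpose_self_nonneg _)]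
  refine prox_objective_le_of_trace_mul_nonneg ?_
  rwa [hG, Matrix.mul_sub, trace_sub, hGW, trace_zero, sub_zero]

/-- The shrinkage operator solves the nuclear-norm proximal subproblem over
the positive semidefinite cone: with `V` orthogonal (`Vᵀ·V = I`), `λ ∈ ℝⁿ`,
`ν ≥ 0`, `Z = V·diag(λ)·Vᵀ` and `W = V·diag(max(0, λᵢ − ν))·Vᵀ`, for every
real symmetric positive semidefinite `X`,
`ν·tr(W) + ½‖W − Z‖_F² ≤ ν·tr(X) + ½‖X − Z‖_F²`,
where `‖A‖_F = √(tr(A·Aᵀ))`. -/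
theorem shrinkage_prox_optimal
    {n : ℕ} (V : Matrix (Fin n) (Fin n) ℝ) (hV : Vᵀ * V = 1)
    (l : Fin n → ℝ) (ν : ℝ) (hν : 0 ≤ ν)
    (Z W : Matrix (Fin n) (Fin n) ℝ)
    (hZ : Z = V * Matrix.diagonal l * Vᵀ)
    (hW : W = V * Matrix.diagonal (fun i => max 0 (l i - ν)) * Vᵀ) :
    ∀ X : Matrix (Fin n) (Fin n) ℝ, X.PosSemidef →
      ν * W.trace + (1 / 2) * (Real.sqrt (((W - Z) * (W - Z)ᵀ).trace)) ^ 2 ≤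
        ν * X.trace + (1 / 2) * (Real.sqrt (((X - Z) * (X - Z)ᵀ).trace)) ^ 2 :=
  shrinkage_prox_optimal_general V hV l ν Z W hZ hW
end

section
/- Let ν ≥ 0, let V₁ and V₂ be n×n real orthogonal matrices (VᵢᵀVᵢ = I), and let λ¹, λ² ∈ ℝⁿ. Set Z₁ = V₁·diag(λ¹)·V₁ᵀ, Z₂ = V₂·diag(λ²)·V₂ᵀ, W₁ = V₁·diag(max(0, λ¹ᵢ − ν))·V₁ᵀ, and W₂ = V₂·diag(max(0, λ²ᵢ − ν))·V₂ᵀ. Then the matrix shrinkage operator is nonexpansive in the Frobenius norm: ‖W₁ − W₂‖_F ≤ ‖Z₁ − Z₂‖_F. -/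
open Matrix Finset

/-!
Conjugating `Z₁ - Z₂` by `V₁ᵀ` on the left and `V₂` on the right preserves the Frobenius norm
and yields `diag(λ¹) Q - Q diag(λ²)` with `Q = V₁ᵀ V₂`, whose `(i, j)` entry is
`Qᵢⱼ (λ¹ᵢ - λ²ⱼ)`. Hence `‖Z₁ - Z₂‖²_F = ∑ᵢⱼ Qᵢⱼ² (λ¹ᵢ - λ²ⱼ)²`, and likewise for `W₁ - W₂`
with the shrunk eigenvalues. Since `x ↦ max 0 (x - ν)` is `1`-Lipschitz, the inequality holds
term by term.
-/

namespace Matrix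

variable {m n R : Type*} [Fintype m] [Fintype n]

theorem trace_mul_transpose_self_eq_sum_sq [CommSemiring R] (M : Matrix m n R) :
    (M * Mᵀ).trace = ∑ i, ∑ j, M i j ^ 2 := by
  simp only [trace, diag, mul_apply, transpose_apply, sq]

theorem trace_mul_transpose_self_conj [DecidableEq m] [DecidableEq n] [CommRing R]
    {U : Matrix m m R} {V : Matrix n n R} (hU : U * Uᵀ = 1) (hV : V * Vᵀ = 1)
    (M : Matrix m n R) :
    ((Uᵀ * M * V) * (Uᵀ * M * V)ᵀ).trace = (M * Mᵀ).trace := by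
  calc ((Uᵀ * M * V) * (Uᵀ * M * V)ᵀ).trace = (Uᵀ * (M * (V * Vᵀ) * Mᵀ) * U).trace := by
        simp only [transpose_mul, transpose_transpose, Matrix.mul_assoc]
    _ = (U * Uᵀ * (M * Mᵀ)).trace := by
        rw [hV, Matrix.mul_one, trace_mul_comm, ← Matrix.mul_assoc]
    _ = (M * Mᵀ).trace := by rw [hU, Matrix.one_mul]

theorem transpose_mul_conj_diagonal_sub_mul [DecidableEq m] [CommRing R]
    {U V : Matrix m m R} (hU : Uᵀ * U = 1) (hV : Vᵀ * V = 1) (a b : m → R) :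
    Uᵀ * (U * diagonal a * Uᵀ - V * diagonal b * Vᵀ) * V
      = diagonal a * (Uᵀ * V) - (Uᵀ * V) * diagonal b := by
  rw [Matrix.mul_sub, Matrix.sub_mul]
  congr 1
  · simp only [← Matrix.mul_assoc, hU, Matrix.one_mul]
  · simp only [Matrix.mul_assoc, hV, Matrix.mul_one]

theorem trace_conj_diagonal_sub_mul_transpose [DecidableEq m] [CommRing R]
    {U V : Matrix m m R} (hU : Uᵀ * U = 1) (hV : Vᵀ * V = 1) (a b : m → R) :
    ((U * diagonal a * Uᵀ - V * diagonal b * Vᵀ) *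
        (U * diagonal a * Uᵀ - V * diagonal b * Vᵀ)ᵀ).trace
      = ∑ i, ∑ j, (Uᵀ * V) i j ^ 2 * (a i - b j) ^ 2 := by
  rw [← trace_mul_transpose_self_conj (mul_eq_one_comm.mp hU) (mul_eq_one_comm.mp hV),
    transpose_mul_conj_diagonal_sub_mul hU hV, trace_mul_transpose_self_eq_sum_sq]
  simp only [Matrix.sub_apply, diagonal_mul, mul_diagonal, mul_comm (a _), ← mul_sub, mul_pow]

end Matrix

theorem sq_max_zero_sub_max_zero_le (x y : ℝ) : (max 0 x - max 0 y) ^ 2 ≤ (x - y) ^ 2 := by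
  rw [max_comm 0 x, max_comm 0 y]
  exact sq_le_sq.mpr (abs_max_sub_max_le_abs x y 0)

theorem shrinkage_nonexpansive_general
    {n : ℕ} (ν : ℝ)
    (V₁ V₂ : Matrix (Fin n) (Fin n) ℝ)
    (hV₁ : V₁ᵀ * V₁ = 1) (hV₂ : V₂ᵀ * V₂ = 1)
    (l₁ l₂ : Fin n → ℝ)
    (Z₁ Z₂ W₁ W₂ : Matrix (Fin n) (Fin n) ℝ)
    (hZ₁ : Z₁ = V₁ * Matrix.diagonal l₁ * V₁ᵀ)
    (hZ₂ : Z₂ = V₂ * Matrix.diagonal l₂ * V₂ᵀ)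
    (hW₁ : W₁ = V₁ * Matrix.diagonal (fun i => max 0 (l₁ i - ν)) * V₁ᵀ)
    (hW₂ : W₂ = V₂ * Matrix.diagonal (fun i => max 0 (l₂ i - ν)) * V₂ᵀ) :
    Real.sqrt (((W₁ - W₂) * (W₁ - W₂)ᵀ).trace) ≤
      Real.sqrt (((Z₁ - Z₂) * (Z₁ - Z₂)ᵀ).trace) := by
  rw [hZ₁, hZ₂, hW₁, hW₂, trace_conj_diagonal_sub_mul_transpose hV₁ hV₂,
    trace_conj_diagonal_sub_mul_transpose hV₁ hV₂]
  refine Real.sqrt_le_sqrt (sum_le_sum fun i _ => sum_le_sum fun j _ => ?_)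
  refine mul_le_mul_of_nonneg_left ?_ (sq_nonneg _)
  simpa only [sub_sub_sub_cancel_right] using
    sq_max_zero_sub_max_zero_le (l₁ i - ν) (l₂ j - ν)

/-- Nonexpansiveness of the matrix shrinkage operator in the Frobenius norm
(`‖A‖_F = √(tr(A·Aᵀ))`): with orthogonal `V₁, V₂` (`VᵢᵀVᵢ = I`), vectors
`λ¹, λ² ∈ ℝⁿ`, threshold `ν ≥ 0`, `Zᵢ = Vᵢ·diag(λⁱ)·Vᵢᵀ` and
`Wᵢ = Vᵢ·diag(max(0, λⁱ − ν))·Vᵢᵀ`, one has `‖W₁ − W₂‖_F ≤ ‖Z₁ − Z₂‖_F`. -/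
theorem shrinkage_nonexpansive
    {n : ℕ} (ν : ℝ) (hν : 0 ≤ ν)
    (V₁ V₂ : Matrix (Fin n) (Fin n) ℝ)
    (hV₁ : V₁ᵀ * V₁ = 1) (hV₂ : V₂ᵀ * V₂ = 1)
    (l₁ l₂ : Fin n → ℝ)
    (Z₁ Z₂ W₁ W₂ : Matrix (Fin n) (Fin n) ℝ)
    (hZ₁ : Z₁ = V₁ * Matrix.diagonal l₁ * V₁ᵀ)
    (hZ₂ : Z₂ = V₂ * Matrix.diagonal l₂ * V₂ᵀ)
    (hW₁ : W₁ = V₁ * Matrix.diagonal (fun i => max 0 (l₁ i - ν)) * V₁ᵀ)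
    (hW₂ : W₂ = V₂ * Matrix.diagonal (fun i => max 0 (l₂ i - ν)) * V₂ᵀ) :
    Real.sqrt (((W₁ - W₂) * (W₁ - W₂)ᵀ).trace) ≤
      Real.sqrt (((Z₁ - Z₂) * (Z₁ - Z₂)ᵀ).trace) :=
  shrinkage_nonexpansive_general ν V₁ V₂ hV₁ hV₂ l₁ l₂ Z₁ Z₂ W₁ W₂ hZ₁ hZ₂ hW₁ hW₂
end
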